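/- An argument ⟨Γ, Δ⟩ is {1}-preservation valid (every probabilistic model giving every γ ∈ Γ probability 1 gives some δ ∈ Δ probability 1) if and only if it is supervaluationistically valid (for every probabilistic model, if every γ ∈ Γ is true at all worlds then some δ ∈ Δ is true at all worlds). -/

import Mathlib

/-- Propositional formulas: atoms, negation, disjunction. -/
inductive Fml : Type
  | atom : ℕ → Fml
  | neg : Fml → Fml
  | or : Fml → Fml → Fml
deriving DecidableEq

namespace Fml

def and (φ ψ : Fml) : Fml := neg (or (neg φ) (neg ψ))

def bot : Fml := and (atom 0) (neg (atom 0))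

def imp (φ ψ : Fml) : Fml := or (neg φ) ψ

def eval (v : ℕ → Bool) : Fml → Bool
  | atom n => v n
  | neg φ => !(eval v φ)
  | or φ ψ => (eval v φ) || (eval v ψ)

end Fml

/-- Two formulas are jointly classically unsatisfiable. -/
def Incompatible (φ ψ : Fml) : Prop :=
  ∀ v : ℕ → Bool, ¬(φ.eval v = true ∧ ψ.eval v = true)

/-- Classical (Set-Set) validity. -/
def ClValid (Γ Δ : Finset Fml) : Prop :=
  ∀ v : ℕ → Bool, (∀ γ ∈ Γ, γ.eval v = true) → ∃ δ ∈ Δ, δ.eval v = true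

/-- Classical single-conclusion entailment. -/
def ClEntails (Γ : Finset Fml) (φ : Fml) : Prop :=
  ∀ v : ℕ → Bool, (∀ γ ∈ Γ, γ.eval v = true) → φ.eval v = true

def ClConsistent (Γ : Finset Fml) : Prop :=
  ∃ v : ℕ → Bool, ∀ γ ∈ Γ, γ.eval v = true

def Tautology (φ : Fml) : Prop := ∀ v : ℕ → Bool, φ.eval v = true

/-- A probability distribution on formulas. -/
structure ProbDist where
  p : Fml → ℝ
  nonneg : ∀ φ, 0 ≤ p φ
  le_one : ∀ φ, p φ ≤ 1
  bot_eq : p Fml.bot = 0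
  neg_eq : ∀ φ, p (Fml.neg φ) = 1 - p φ
  add_eq : ∀ φ ψ, Incompatible φ ψ → p (Fml.or φ ψ) = p φ + p ψ

/-- A probabilistic model: worlds with classical valuations and a finitely
additive probability measure on subsets of worlds. -/
structure PModel where
  W : Type
  nonempty : Nonempty W
  val : W → ℕ → Bool
  μ : Set W → ℝ
  nonneg : ∀ A : Set W, 0 ≤ μ A
  empty_eq : μ (∅ : Set W) = 0
  univ_eq : μ (Set.univ : Set W) = 1
  add_eq : ∀ A B : Set W, Disjoint A B → μ (A ∪ B) = μ A + μ B

/-- Denotation of a formula in a model. -/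
def PModel.den (M : PModel) (φ : Fml) : Set M.W := {w | φ.eval (M.val w) = true}

/-- Induced probability of a formula in a model. -/
def PModel.prob (M : PModel) (φ : Fml) : ℝ := M.μ (M.den φ)

/-- An upset of [0,1]: contains 1, excludes 0, upward closed within [0,1]. -/
def IsUpset (α : Set ℝ) : Prop :=
  α ⊆ Set.Icc 0 1 ∧ (1 : ℝ) ∈ α ∧ (0 : ℝ) ∉ α ∧
    ∀ x ∈ α, ∀ y ∈ Set.Icc (0:ℝ) 1, x ≤ y → y ∈ α

/-- The mirror image of α. -/
def mirror (α : Set ℝ) : Set ℝ := {x ∈ Set.Icc (0:ℝ) 1 | 1 - x ∈ α}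

/-- The dual of α. -/
def dual (α : Set ℝ) : Set ℝ := Set.Icc (0:ℝ) 1 \ mirror α

/-- Conjunction of a finite set of formulas. -/
noncomputable def conj (Γ : Finset Fml) : Fml := Γ.toList.foldr Fml.and (Fml.neg Fml.bot)

/-- Disjunction of a finite set of formulas. -/
noncomputable def disj (Δ : Finset Fml) : Fml := Δ.toList.foldr Fml.or Fml.bot

/-- Disjunction of a list of formulas. -/
def disjList (l : List Fml) : Fml := l.foldr Fml.or Fml.bot

/-- α-preservation validity (over probability distributions). -/
def PresValid (α : Set ℝ) (Γ Δ : Finset Fml) : Prop :=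
  ∀ P : ProbDist, (∀ γ ∈ Γ, P.p γ ∈ α) → ∃ δ ∈ Δ, P.p δ ∈ α

/-- α-preservation validity (over probabilistic models). -/
def PresValidM (α : Set ℝ) (Γ Δ : Finset Fml) : Prop :=
  ∀ M : PModel, (∀ γ ∈ Γ, M.prob γ ∈ α) → ∃ δ ∈ Δ, M.prob δ ∈ α

/-- α-symmetric validity. -/
def SymValid (α : Set ℝ) (Γ Δ : Finset Fml) : Prop :=
  ∀ P : ProbDist, (∀ γ ∈ Γ, P.p γ ∈ α) → ∃ δ ∈ Δ, P.p δ ∉ mirror α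

/-- α-satisfiability of a finite set of formulas. -/
def Satis (α : Set ℝ) (Γ : Finset Fml) : Prop :=
  ∃ P : ProbDist, ∀ γ ∈ Γ, P.p γ ∈ α

/- Supervaluation ⇒ preservation: if every premise has probability 1, so does the finite
intersection `S` of their denotations; conditioning the model on `S` makes every premise true at
all worlds, so some conclusion holds throughout `S` and hence has probability 1.
Preservation ⇒ supervaluation: if every conclusion `δ` fails at some world `w δ`, the uniform
distribution on the points `w δ` keeps every universally true premise at probability 1 but gives
every conclusion probability below 1. -/

namespace PModel

variable (M : PModel)

lemma measure_mono {A B : Set M.W} (h : A ⊆ B) : M.μ A ≤ M.μ B := by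
  have : M.μ B = M.μ A + M.μ (B \ A) := by
    rw [← M.add_eq A (B \ A) Set.disjoint_sdiff_right, Set.union_sdiff_cancel h]
  linarith [M.nonneg (B \ A)]

lemma measure_le_one (A : Set M.W) : M.μ A ≤ 1 :=
  M.univ_eq ▸ M.measure_mono (Set.subset_univ A)

lemma measure_compl (A : Set M.W) : M.μ Aᶜ = 1 - M.μ A := by
  have := M.add_eq A Aᶜ disjoint_compl_right
  rw [Set.union_compl_self, M.univ_eq] at this
  linarith

lemma measure_eq_one_of_subset {A B : Set M.W} (hA : M.μ A = 1) (h : A ⊆ B) : M.μ B = 1 :=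
  le_antisymm (M.measure_le_one B) (hA ▸ M.measure_mono h)

lemma measure_inter_eq_one {A B : Set M.W} (hA : M.μ A = 1) (hB : M.μ B = 1) :
    M.μ (A ∩ B) = 1 := by
  have hsplit : M.μ A = M.μ (A ∩ B) + M.μ (A \ B) := by
    rw [← M.add_eq _ _ Set.disjoint_sdiff_inter.symm, Set.inter_union_sdiff]
  have hdiff : M.μ (A \ B) ≤ M.μ Bᶜ := M.measure_mono (Set.sdiff_subset_compl A B)
  linarith [M.measure_compl B, M.measure_le_one (A ∩ B)]

lemma measure_biInter_eq_one {ι : Type*} (s : Finset ι) {A : ι → Set M.W}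
    (h : ∀ i ∈ s, M.μ (A i) = 1) : M.μ (⋂ i ∈ s, A i) = 1 := by
  classical
  induction s using Finset.induction with
  | empty => simpa using M.univ_eq
  | insert i s _ ih =>
    rw [Finset.set_biInter_insert]
    exact M.measure_inter_eq_one (h i (Finset.mem_insert_self i s))
      (ih fun j hj => h j (Finset.mem_insert_of_mem hj))

lemma prob_eq_one_of_den_eq_univ {φ : Fml} (h : M.den φ = Set.univ) : M.prob φ = 1 := by
  rw [prob, h, M.univ_eq]

/-- Conditioning on a set of measure one. -/
def restrict (S : Set M.W) (hS : M.μ S = 1) : PModel where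
  W := S
  nonempty := by
    refine (Set.nonempty_iff_ne_empty.2 ?_).to_subtype
    rintro rfl
    simp [M.empty_eq] at hS
  val w := M.val w
  μ A := M.μ (Subtype.val '' A)
  nonneg _ := M.nonneg _
  empty_eq := by rw [Set.image_empty, M.empty_eq]
  univ_eq := by rwa [Set.image_univ, Subtype.range_coe]
  add_eq A B h := by
    rw [Set.image_union]
    exact M.add_eq _ _ (Set.disjoint_image_of_injective Subtype.val_injective h)

lemma restrict_den_eq_univ_iff {S : Set M.W} (hS : M.μ S = 1) {φ : Fml} :
    (M.restrict S hS).den φ = Set.univ ↔ S ⊆ M.den φ := by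
  rw [Set.eq_univ_iff_forall]
  exact ⟨fun h w hw => h ⟨w, hw⟩, fun h w => h w.2⟩

open Classical in
/-- The uniform distribution on the points `pt i`, counted with multiplicity. -/
noncomputable def uniform {W : Type} (val : W → ℕ → Bool) {ι : Type*} [Fintype ι] [Nonempty ι]
    (pt : ι → W) : PModel where
  W := W
  nonempty := ⟨pt (Classical.arbitrary ι)⟩
  val := val
  μ A := (Finset.univ.filter fun i => pt i ∈ A).card / Fintype.card ι
  nonneg _ := by positivity
  empty_eq := by simp
  univ_eq := by simp
  add_eq A B h := by
    simp only [Set.mem_union, Finset.filter_or]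
    rw [Finset.card_union_of_disjoint, Nat.cast_add, add_div]
    exact Finset.disjoint_filter.2 fun i _ hA hB => Set.disjoint_left.1 h hA hB

lemma uniform_prob_lt_one {W : Type} (val : W → ℕ → Bool) {ι : Type*} [Fintype ι] [Nonempty ι]
    (pt : ι → W) {φ : Fml} {i : ι} (hi : φ.eval (val (pt i)) ≠ true) :
    (uniform val pt).prob φ < 1 := by
  classical
  have hlt : (Finset.univ.filter fun j => pt j ∈ (uniform val pt).den φ).card < Fintype.card ι :=
    Finset.card_lt_card (Finset.filter_ssubset.2 ⟨i, Finset.mem_univ i, hi⟩)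
  change ((Finset.univ.filter fun j => pt j ∈ (uniform val pt).den φ).card : ℝ) /
    Fintype.card ι < 1
  rw [div_lt_one (by exact_mod_cast Fintype.card_pos)]
  exact_mod_cast hlt

end PModel

open PModel

def SupervaluationValid (Γ Δ : Finset Fml) : Prop :=
  ∀ M : PModel, (∀ γ ∈ Γ, M.den γ = Set.univ) → ∃ δ ∈ Δ, M.den δ = Set.univ

variable {Γ Δ : Finset Fml}

theorem SupervaluationValid.of_presValidM_one (h : PresValidM {1} Γ Δ) :
    SupervaluationValid Γ Δ := by
  intro M hΓ
  obtain ⟨δ₀, hδ₀, -⟩ := h M fun γ hγ => M.prob_eq_one_of_den_eq_univ (hΓ γ hγ)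
  by_contra! hfail
  have hwit (δ : Δ) : ∃ w, δ.1.eval (M.val w) ≠ true := by
    simpa [Set.eq_univ_iff_forall, den] using hfail δ δ.2
  choose pt hpt using hwit
  have : Nonempty Δ := ⟨⟨δ₀, hδ₀⟩⟩
  obtain ⟨δ, hδ, hδ1⟩ := h (uniform M.val pt) fun γ hγ =>
    prob_eq_one_of_den_eq_univ _ (hΓ γ hγ)
  exact (uniform_prob_lt_one M.val pt (hpt ⟨δ, hδ⟩)).ne hδ1

theorem SupervaluationValid.presValidM_one (h : SupervaluationValid Γ Δ) :
    PresValidM {1} Γ Δ := by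
  intro M hΓ
  have hS := M.measure_biInter_eq_one Γ hΓ
  obtain ⟨δ, hδ, hδS⟩ := h (M.restrict _ hS) fun γ hγ =>
    (M.restrict_den_eq_univ_iff hS).2 (Set.biInter_subset_of_mem hγ)
  exact ⟨δ, hδ, M.measure_eq_one_of_subset hS ((M.restrict_den_eq_univ_iff hS).1 hδS)⟩

/-- {1}-preservation validity coincides with supervaluationist validity. -/
theorem stmt2 (Γ Δ : Finset Fml) :
    (∀ M : PModel, (∀ γ ∈ Γ, M.prob γ = 1) → ∃ δ ∈ Δ, M.prob δ = 1) ↔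
    (∀ M : PModel, (∀ γ ∈ Γ, M.den γ = Set.univ) → ∃ δ ∈ Δ, M.den δ = Set.univ) :=
  ⟨SupervaluationValid.of_presValidM_one, SupervaluationValid.presValidM_one⟩
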